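/- Let n ≥ 2 and 0 ≤ i ≤ n − 1, and let α ∈ P_i. Then there exists a unique π ∈ P_{i+1} such that |α ∩ π| = n − 1 and |(α ⊖ 2) ∩ π| = n − 1. -/

import Mathlib

/-!
Common definitions: stable n-sets in `ZMod (2*n+2)`, tight/loose sets, shifts,
outer neighbors, parity, the sets `P_i`, and adjacency in the stable Kneser
graph `SG_{n,2}` (two stable n-sets are adjacent iff they are disjoint).
-/

instance (n : ℕ) : NeZero (2 * n + 2) := ⟨by omega⟩

/-- A stable n-set: a finite subset of `ZMod (2n+2)` of cardinality `n`
containing no two (cyclically) consecutive elements. -/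
def IsStable (n : ℕ) (α : Finset (ZMod (2 * n + 2))) : Prop :=
  α.card = n ∧ ∀ i : ZMod (2 * n + 2), ¬(i ∈ α ∧ i + 1 ∈ α)

/-- A set is tight if it has the form `{i, i+2, i+4, …, i+2(n-1)}`. -/
def IsTight (n : ℕ) (α : Finset (ZMod (2 * n + 2))) : Prop :=
  ∃ i : ZMod (2 * n + 2), α = (Finset.range n).image (fun k : ℕ => i + 2 * (k : ZMod (2 * n + 2)))

/-- `α ⊕ j`, the shift of `α` by `j`. -/
def oplus (n : ℕ) (α : Finset (ZMod (2 * n + 2))) (j : ZMod (2 * n + 2)) :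
    Finset (ZMod (2 * n + 2)) :=
  α.image (fun a => a + j)

/-- `α ⊖ j`, the shift of `α` by `-j`. -/
def ominus (n : ℕ) (α : Finset (ZMod (2 * n + 2))) (j : ZMod (2 * n + 2)) :
    Finset (ZMod (2 * n + 2)) :=
  α.image (fun a => a - j)

/-- `β` is an outer neighbor of `α`: they are disjoint and
`β = ((α \ {a}) ⊕ 1) ∪ {a + 2}` for some `a ∈ α`. -/
def OuterNbr (n : ℕ) (α β : Finset (ZMod (2 * n + 2))) : Prop :=
  Disjoint α β ∧ ∃ a ∈ α, β = oplus n (α.erase a) 1 ∪ {a + 2}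

/-- The parity of an element of `ZMod (2n+2)`: its image in `ZMod 2` under the
natural ring homomorphism. -/
def parity (n : ℕ) (a : ZMod (2 * n + 2)) : ZMod 2 :=
  ZMod.castHom (show (2 : ℕ) ∣ 2 * n + 2 from ⟨n + 1, by ring⟩) (ZMod 2) a

/-- Adjacency in the stable Kneser graph `SG_{n,2}`: two distinct stable n-sets
are adjacent iff they are disjoint. -/
def SGAdj (n : ℕ) (α β : Finset (ZMod (2 * n + 2))) : Prop :=
  IsStable n α ∧ IsStable n β ∧ α ≠ β ∧ Disjoint α β

/-- `P_i`: stable n-sets with exactly `i` even elements and `n - i` odd elements. -/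
def Pset (n i : ℕ) : Set (Finset (ZMod (2 * n + 2))) :=
  {α | IsStable n α ∧ (α.filter fun a => parity n a = 0).card = i ∧
       (α.filter fun a => parity n a = 1).card = n - i}

/-!
A stable `n`-set `α` has exactly two *holes*, points `y` with `y ∉ α` and `y - 1 ∉ α`, because
`α` and `α ⊕ 1` are disjoint of size `n` in a cycle of length `2n + 2`. If `x ∈ α` but
`x + 2 ∉ α` then `x + 2` is a hole, so the holes determine `α ∩ (α ⊖ 2)`. A set `π` with
`|α ∩ π| = n - 1` is `(α \ {r}) ∪ {s}`, and going from `P_i` to `P_{i+1}` forces `r` odd and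
`s` even. Let `a ∈ α` be odd with `a + 2 ∉ α` (following `x, x + 2, x + 4, …` from an odd
`x ∈ α` must leave `α`). If `α` is all odd, the holes are `a + 2, a + 3` and `a` is the only
element of `α \ (α ⊖ 2)`: the count `|(α ⊖ 2) ∩ π| = n - 1` forces `r = a`, and stability of
`π` forces `s = a + 1`. Otherwise there is also an even `e ∈ α` with `e + 2 ∉ α`, the holes are
`a + 2, e + 2`, and the count forces `s + 2 ∈ α`, so that `s + 1` is the odd hole `a + 2`.
-/

open Finset

theorem exists_add_nsmul_mem_add_succ_nsmul_notMem {G : Type*} [AddGroup G] (S : Finset G)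
    {x g : G} (hx : x ∈ S) (hS : #S < addOrderOf g) :
    ∃ k : ℕ, x + k • g ∈ S ∧ x + (k + 1) • g ∉ S := by
  by_contra! hclosed
  have hmem : ∀ k : ℕ, x + k • g ∈ S := fun k => by
    induction k with
    | zero => simpa using hx
    | succ k ih => exact hclosed k ih
  have hinj : Set.InjOn (fun k : ℕ => x + k • g) (range (addOrderOf g)) := fun k hk l hl h =>
    nsmul_injOn_Iio_addOrderOf (by simpa using hk) (by simpa using hl) (add_left_cancel h)
  have := card_le_card_of_injOn _ (fun k _ => hmem k) hinj
  rw [card_range] at this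
  omega

theorem exists_eq_insert_erase_of_card_inter {β : Type*} [DecidableEq β] {α π : Finset β}
    (hcard : #π = #α) (hinter : #(α ∩ π) + 1 = #α) :
    ∃ r ∈ α, ∃ s ∉ α, π = insert s (α.erase r) := by
  obtain ⟨r, hr, hα⟩ := exists_eq_insert_iff.2 ⟨inter_subset_left, hinter⟩
  obtain ⟨s, hs, hπ⟩ := exists_eq_insert_iff.2 ⟨inter_subset_right, hcard ▸ hinter⟩
  refine ⟨r, hα ▸ mem_insert_self _ _, s,
    fun hsα => hs (mem_inter.2 ⟨hsα, hπ ▸ mem_insert_self _ _⟩), ?_⟩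
  calc π = insert s (α ∩ π) := hπ.symm
    _ = insert s ((insert r (α ∩ π)).erase r) := by rw [erase_insert hr]
    _ = insert s (α.erase r) := by rw [hα]

section StableSets

variable {n : ℕ} {α : Finset (ZMod (2 * n + 2))} {a e r s x : ZMod (2 * n + 2)}

theorem parity_add (x y : ZMod (2 * n + 2)) : parity n (x + y) = parity n x + parity n y :=
  map_add _ _ _

theorem parity_ofNat (k : ℕ) [k.AtLeastTwo] :
    parity n (OfNat.ofNat k : ZMod (2 * n + 2)) = OfNat.ofNat k :=
  map_ofNat _ _

theorem parity_nsmul (k : ℕ) (x : ZMod (2 * n + 2)) : parity n (k • x) = k • parity n x :=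
  map_nsmul _ _ _

theorem parity_one : parity n 1 = 1 := map_one _

theorem parity_two : parity n 2 = 0 := (parity_ofNat 2).trans rfl

theorem parity_eq_one_of_ne_zero (h : parity n x ≠ 0) : parity n x = 1 :=
  Fin.eq_one_of_ne_zero _ h

theorem ne_of_parity_ne {x y : ZMod (2 * n + 2)} (h : parity n x ≠ parity n y) : x ≠ y :=
  mt (congrArg _) h

theorem addOrderOf_two : addOrderOf (2 : ZMod (2 * n + 2)) = n + 1 := by
  have := ZMod.addOrderOf_coe 2 (n := 2 * n + 2) (by omega)
  rw [Nat.cast_ofNat] at this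
  rw [this, show 2 * n + 2 = 2 * (n + 1) by ring, Nat.gcd_mul_right_left]
  omega

theorem mem_oplus {j : ZMod (2 * n + 2)} : x ∈ oplus n α j ↔ x - j ∈ α := by
  simp [oplus, sub_eq_add_neg]

theorem mem_ominus {j : ZMod (2 * n + 2)} : x ∈ ominus n α j ↔ x + j ∈ α := by
  simp [ominus, sub_eq_iff_eq_add]

theorem exists_mem_parity_eq_add_two_notMem (hcard : #α ≤ n) (hx : x ∈ α) :
    ∃ a ∈ α, parity n a = parity n x ∧ a + 2 ∉ α := by
  obtain ⟨k, hk, hk1⟩ := exists_add_nsmul_mem_add_succ_nsmul_notMem α hx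
    (g := (2 : ZMod (2 * n + 2))) (by rw [addOrderOf_two]; omega)
  refine ⟨x + k • 2, hk, ?_, by rwa [succ_nsmul, ← add_assoc] at hk1⟩
  rw [parity_add, parity_nsmul, parity_two, smul_zero, add_zero]

theorem add_natCast_ne_self {c : ℕ} (h0 : 0 < c) (hc : c < 2 * n + 2) (x : ZMod (2 * n + 2)) :
    x + c ≠ x := by
  rw [Ne, add_eq_left, ZMod.natCast_eq_zero_iff]
  exact fun hdvd => absurd (Nat.le_of_dvd h0 hdvd) (by omega)

def holes (n : ℕ) (α : Finset (ZMod (2 * n + 2))) : Finset (ZMod (2 * n + 2)) :=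
  (α ∪ oplus n α 1)ᶜ

theorem mem_holes : x ∈ holes n α ↔ x ∉ α ∧ x - 1 ∉ α := by
  simp [holes, mem_oplus]

theorem card_holes (hα : IsStable n α) : #(holes n α) = 2 := by
  have hdisj : Disjoint α (oplus n α 1) := disjoint_left.2 fun y hy hy' =>
    hα.2 (y - 1) ⟨mem_oplus.1 hy', by rwa [sub_add_cancel]⟩
  have hshift : #(oplus n α 1) = n := by
    rw [oplus, card_image_of_injective _ (add_left_injective 1), hα.1]
  rw [holes, card_compl, card_union_of_disjoint hdisj, hshift, hα.1, ZMod.card]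
  omega

theorem holes_eq_pair (hα : IsStable n α) {y z : ZMod (2 * n + 2)} (hy : y ∈ holes n α)
    (hz : z ∈ holes n α) (hyz : y ≠ z) : holes n α = {y, z} :=
  (eq_of_subset_of_card_le (insert_subset hy (singleton_subset_iff.2 hz))
    (by rw [card_holes hα, card_pair hyz])).symm

theorem add_two_mem_holes (hα : IsStable n α) (hx : x ∈ α) (hx2 : x + 2 ∉ α) :
    x + 2 ∈ holes n α :=
  mem_holes.2 ⟨hx2, fun h => hα.2 x ⟨hx, by rwa [show x + 2 - 1 = x + 1 by ring] at h⟩⟩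

theorem inter_insert_erase (hs : s ∉ α) : α ∩ insert s (α.erase r) = α.erase r := by
  rw [inter_insert_of_notMem hs, inter_eq_right.2 (erase_subset r α)]

theorem card_ominus_inter_insert_erase (hs : s ∉ α) :
    #(ominus n α 2 ∩ insert s (α.erase r)) =
      #((α ∩ ominus n α 2).erase r) + if s + 2 ∈ α then 1 else 0 := by
  have hs' : s ∉ (α ∩ ominus n α 2).erase r := fun h => hs (mem_inter.1 (mem_of_mem_erase h)).1
  split_ifs with hs2
  · rw [inter_insert_of_mem (mem_ominus.2 hs2), inter_erase, inter_comm,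
      card_insert_of_notMem hs']
  · rw [inter_insert_of_notMem (mt mem_ominus.1 hs2), inter_erase, inter_comm, add_zero]

theorem parity_eq_of_card_filter_insert_erase {i : ℕ} (hr : r ∈ α) (hs : s ∉ α)
    (hα : #(α.filter fun x => parity n x = 0) = i)
    (hπ : #((insert s (α.erase r)).filter fun x => parity n x = 0) = i + 1) :
    parity n r = 1 ∧ parity n s = 0 := by
  rw [filter_insert, filter_erase] at hπ
  split_ifs at hπ with hs0
  · have hs' : s ∉ (α.filter fun x => parity n x = 0).erase r :=
      fun h => hs (mem_filter.1 (mem_of_mem_erase h)).1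
    rw [card_insert_of_notMem hs'] at hπ
    refine ⟨parity_eq_one_of_ne_zero fun hr0' => ?_, hs0⟩
    have hr0 : r ∈ α.filter fun x => parity n x = 0 := mem_filter.2 ⟨hr, hr0'⟩
    rw [card_erase_of_mem hr0, hα] at hπ
    have := card_pos.2 ⟨r, hr0⟩
    omega
  · have := card_erase_le (s := α.filter fun x => parity n x = 0) (a := r)
    omega

theorem insert_add_one_erase_mem_Pset {i : ℕ} (hα : α ∈ Pset n i) (ha : a ∈ α)
    (ha1 : parity n a = 1) (ha2 : a + 2 ∉ α) : insert (a + 1) (α.erase a) ∈ Pset n (i + 1) := by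
  obtain ⟨⟨hcard, hstab⟩, heven, hodd⟩ := hα
  have ha1α : a + 1 ∉ α := fun h => hstab a ⟨ha, h⟩
  have ha1' : a + 1 ∉ α.erase a := fun h => ha1α (mem_of_mem_erase h)
  have hpa1 : parity n (a + 1) = 0 := by rw [parity_add, parity_one, ha1]; decide
  refine ⟨⟨?_, ?_⟩, ?_, ?_⟩
  · rw [card_insert_of_notMem ha1', card_erase_of_mem ha, hcard]
    have := card_pos.2 ⟨a, ha⟩
    omega
  · rintro x ⟨hx, hx1⟩
    rcases mem_insert.1 hx with rfl | hx
    · rcases mem_insert.1 hx1 with h | h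
      · exact ne_of_parity_ne (by rw [parity_add, hpa1, parity_one]; decide) h
      · rw [add_assoc, one_add_one_eq_two] at h
        exact ha2 (mem_of_mem_erase h)
    · rcases mem_insert.1 hx1 with h | h
      · exact (mem_erase.1 hx).1 (add_right_cancel h)
      · exact hstab x ⟨mem_of_mem_erase hx, mem_of_mem_erase h⟩
  · have ha0 : a ∉ α.filter fun x => parity n x = 0 := fun h => by
      rw [(mem_filter.1 h).2] at ha1; exact absurd ha1 (by decide)
    rw [filter_insert, if_pos hpa1, filter_erase, erase_eq_of_notMem ha0,
      card_insert_of_notMem (fun h => ha1α (mem_filter.1 h).1), heven]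
  · rw [filter_insert, if_neg (by rw [hpa1]; decide), filter_erase,
      card_erase_of_mem (mem_filter.2 ⟨ha, ha1⟩), hodd]
    omega

theorem holes_eq_of_forall_parity_eq_one (hα : IsStable n α) (hodd : ∀ x ∈ α, parity n x = 1)
    (ha : a ∈ α) (ha2 : a + 2 ∉ α) : holes n α = {a + 2, a + 3} := by
  have ha1 := hodd a ha
  have ha3 : a + 3 ∉ α := fun h => by
    have := hodd _ h
    rw [parity_add, parity_ofNat, ha1] at this
    exact absurd this (by decide)
  exact holes_eq_pair hα (add_two_mem_holes hα ha ha2)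
    (mem_holes.2 ⟨ha3, by rwa [show a + 3 - 1 = a + 2 by ring]⟩)
    (ne_of_parity_ne (by rw [parity_add, parity_add, parity_ofNat, parity_ofNat, ha1]; decide))

theorem inter_ominus_eq_erase_of_forall_parity_eq_one (hα : IsStable n α)
    (hodd : ∀ x ∈ α, parity n x = 1) (ha : a ∈ α) (ha2 : a + 2 ∉ α) :
    α ∩ ominus n α 2 = α.erase a := by
  ext x
  simp only [mem_inter, mem_erase, mem_ominus]
  refine ⟨fun ⟨hx, hx2⟩ => ⟨fun h => ha2 (h ▸ hx2), hx⟩, fun ⟨hxa, hx⟩ => ⟨hx, ?_⟩⟩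
  by_contra hx2
  have := add_two_mem_holes hα hx hx2
  rw [holes_eq_of_forall_parity_eq_one hα hodd ha ha2, mem_insert, mem_singleton] at this
  rcases this with h | h
  · exact hxa (add_right_cancel h)
  · rw [show a + 3 = a + 1 + 2 by ring] at h
    exact hα.2 a ⟨ha, add_right_cancel h ▸ hx⟩

theorem eq_add_one_of_forall_parity_eq_one (hn : 2 ≤ n) (hα : IsStable n α)
    (hodd : ∀ x ∈ α, parity n x = 1) (ha : a ∈ α) (ha2 : a + 2 ∉ α) (hs : s ∉ α)
    (hs0 : parity n s = 0) (hπ : IsStable n (insert s (α.erase a))) : s = a + 1 := by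
  have ha1 := hodd a ha
  have hholes := holes_eq_of_forall_parity_eq_one hα hodd ha ha2
  by_contra hsa
  have hs1 : s - 1 ∉ α := fun h => hπ.2 (s - 1)
    ⟨mem_insert_of_mem (mem_erase.2 ⟨fun h' => hsa (by rw [← h', sub_add_cancel]), h⟩),
      by rw [sub_add_cancel]; exact mem_insert_self _ _⟩
  have hs3 : s = a + 3 := by
    have := mem_holes.2 ⟨hs, hs1⟩
    rw [hholes, mem_insert, mem_singleton] at this
    exact this.resolve_left
      (ne_of_parity_ne (by rw [hs0, parity_add, parity_ofNat, ha1]; decide))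
  have ha4 : a + 4 ∈ α := by
    by_contra ha4
    have := mem_holes.2 ⟨ha4, by rwa [show a + 4 - 1 = a + 3 by ring, ← hs3]⟩
    rw [hholes, mem_insert, mem_singleton] at this
    rcases this with h | h
    · have h2 := add_natCast_ne_self (c := 2) (by omega) (by omega) (a + 2)
      push_cast at h2
      exact h2 (by linear_combination h)
    · exact ne_of_parity_ne
        (by rw [parity_add, parity_add, parity_ofNat, parity_ofNat, ha1]; decide) h
  have h4 := add_natCast_ne_self (c := 4) (by omega) (by omega) a
  push_cast at h4
  rw [show a + 4 = s + 1 by rw [hs3]; ring] at ha4 h4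
  exact hπ.2 s ⟨mem_insert_self _ _, mem_insert_of_mem (mem_erase.2 ⟨h4, ha4⟩)⟩

theorem card_ominus_inter_eq_iff_of_forall_parity_eq_one (hn : 2 ≤ n) (hα : IsStable n α)
    (hodd : ∀ x ∈ α, parity n x = 1) (ha : a ∈ α) (ha2 : a + 2 ∉ α) (hr : r ∈ α) (hs : s ∉ α)
    (hs0 : parity n s = 0) (hπ : IsStable n (insert s (α.erase r))) :
    #(ominus n α 2 ∩ insert s (α.erase r)) = n - 1 ↔ r = a ∧ s = a + 1 := by
  have hs2 : s + 2 ∉ α := fun h => by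
    have := hodd _ h
    rw [parity_add, parity_ofNat, hs0] at this
    exact absurd this (by decide)
  rw [card_ominus_inter_insert_erase hs,
    inter_ominus_eq_erase_of_forall_parity_eq_one hα hodd ha ha2, if_neg hs2, add_zero]
  constructor
  · intro h
    obtain rfl : r = a := by
      by_contra hra
      rw [card_erase_of_mem (mem_erase.2 ⟨hra, hr⟩), card_erase_of_mem ha, hα.1] at h
      omega
    exact ⟨rfl, eq_add_one_of_forall_parity_eq_one hn hα hodd hr ha2 hs hs0 hπ⟩
  · rintro ⟨rfl, rfl⟩
    rw [erase_idem, card_erase_of_mem hr, hα.1]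

theorem holes_eq_of_parity_eq_zero (hα : IsStable n α) (ha : a ∈ α) (ha1 : parity n a = 1)
    (ha2 : a + 2 ∉ α) (he : e ∈ α) (he0 : parity n e = 0) (he2 : e + 2 ∉ α) :
    holes n α = {a + 2, e + 2} :=
  holes_eq_pair hα (add_two_mem_holes hα ha ha2) (add_two_mem_holes hα he he2)
    (ne_of_parity_ne (by rw [parity_add, parity_add, ha1, he0, parity_two]; decide))

theorem inter_ominus_eq_erase_erase (hα : IsStable n α) (hholes : holes n α = {a + 2, e + 2}) :
    α ∩ ominus n α 2 = (α.erase a).erase e := by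
  have ha2 : a + 2 ∉ α := (mem_holes.1 (hholes ▸ mem_insert_self _ _)).1
  have he2 : e + 2 ∉ α := (mem_holes.1 (hholes ▸ mem_insert_of_mem (mem_singleton_self _))).1
  ext x
  simp only [mem_inter, mem_erase, mem_ominus]
  refine ⟨fun ⟨hx, hx2⟩ => ⟨fun h => he2 (h ▸ hx2), fun h => ha2 (h ▸ hx2), hx⟩,
    fun ⟨hxe, hxa, hx⟩ => ⟨hx, ?_⟩⟩
  by_contra hx2
  have := add_two_mem_holes hα hx hx2
  rw [hholes, mem_insert, mem_singleton] at this
  exact this.elim (fun h => hxa (add_right_cancel h)) (fun h => hxe (add_right_cancel h))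

theorem add_three_mem_of_holes_eq (hα : IsStable n α) (ha : a ∈ α) (ha1 : parity n a = 1)
    (he : e ∈ α) (hholes : holes n α = {a + 2, e + 2}) : a + 3 ∈ α := by
  by_contra ha3
  have := mem_holes.2 ⟨ha3, by
    rw [show a + 3 - 1 = a + 2 by ring]; exact (mem_holes.1 (hholes ▸ mem_insert_self _ _)).1⟩
  rw [hholes, mem_insert, mem_singleton] at this
  rcases this with h | h
  · exact ne_of_parity_ne
      (by rw [parity_add, parity_add, parity_ofNat, parity_ofNat, ha1]; decide) h
  · exact hα.2 a ⟨ha, by rwa [show a + 1 = e by linear_combination h]⟩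

theorem card_ominus_inter_eq_iff_of_parity_eq_zero (hα : IsStable n α) (ha : a ∈ α)
    (ha1 : parity n a = 1) (ha2 : a + 2 ∉ α) (he : e ∈ α) (he0 : parity n e = 0)
    (he2 : e + 2 ∉ α) (hr : r ∈ α) (hr1 : parity n r = 1) (hs : s ∉ α) (hs0 : parity n s = 0) :
    #(ominus n α 2 ∩ insert s (α.erase r)) = n - 1 ↔ r = a ∧ s = a + 1 := by
  have hholes := holes_eq_of_parity_eq_zero hα ha ha1 ha2 he he0 he2
  have hKcard : #((α.erase a).erase e) + 2 = n := by
    have he' : e ∈ α.erase a := mem_erase.2 ⟨ne_of_parity_ne (by rw [ha1, he0]; decide), he⟩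
    have hpos := card_pos.2 ⟨e, he'⟩
    rw [card_erase_of_mem ha, hα.1] at hpos
    rw [card_erase_of_mem he', card_erase_of_mem ha, hα.1]
    omega
  rw [card_ominus_inter_insert_erase hs, inter_ominus_eq_erase_erase hα hholes]
  constructor
  · intro h
    have hs2 : s + 2 ∈ α := by
      by_contra hs2
      rw [if_neg hs2] at h
      have := card_erase_le (s := (α.erase a).erase e) (a := r)
      omega
    rw [if_pos hs2] at h
    have hrK : r ∉ (α.erase a).erase e := fun hrK => by
      have := card_pos.2 ⟨r, hrK⟩
      rw [card_erase_of_mem hrK] at h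
      omega
    refine ⟨by_contra fun hra => hrK (mem_erase.2 ⟨ne_of_parity_ne (by rw [hr1, he0]; decide),
      mem_erase.2 ⟨hra, hr⟩⟩), ?_⟩
    have hs1 : s + 1 ∈ holes n α := mem_holes.2 ⟨fun h => hα.2 (s + 1) ⟨h, by
      rwa [add_assoc, one_add_one_eq_two]⟩, by rwa [add_sub_cancel_right]⟩
    rw [hholes, mem_insert, mem_singleton] at hs1
    rcases hs1 with h | h
    · linear_combination h
    · refine absurd h (ne_of_parity_ne ?_)
      rw [parity_add, parity_add, hs0, he0, parity_one, parity_two]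
      decide
  · rintro ⟨rfl, rfl⟩
    have hr3 : r + 1 + 2 ∈ α := by
      rw [show r + 1 + 2 = r + 3 by ring]
      exact add_three_mem_of_holes_eq hα hr hr1 he hholes
    rw [if_pos hr3, erase_eq_of_notMem fun h => (mem_erase.1 (mem_of_mem_erase h)).1 rfl]
    omega

theorem exists_mem_parity_eq_one_add_two_notMem {i : ℕ} (hα : α ∈ Pset n i) (hi : i < n) :
    ∃ a ∈ α, parity n a = 1 ∧ a + 2 ∉ α := by
  obtain ⟨x, hx⟩ := card_pos.1 (hα.2.2 ▸ (by omega : 0 < n - i))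
  obtain ⟨a, ha, hax, ha2⟩ := exists_mem_parity_eq_add_two_notMem hα.1.1.le (mem_filter.1 hx).1
  exact ⟨a, ha, hax.trans (mem_filter.1 hx).2, ha2⟩

theorem card_ominus_inter_eq_iff (hn : 2 ≤ n) (hα : IsStable n α) (ha : a ∈ α)
    (ha1 : parity n a = 1) (ha2 : a + 2 ∉ α) (hr : r ∈ α) (hr1 : parity n r = 1) (hs : s ∉ α)
    (hs0 : parity n s = 0) (hπ : IsStable n (insert s (α.erase r))) :
    #(ominus n α 2 ∩ insert s (α.erase r)) = n - 1 ↔ r = a ∧ s = a + 1 := by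
  by_cases heven : ∃ x ∈ α, parity n x = 0
  · obtain ⟨x, hx, hx0⟩ := heven
    obtain ⟨e, he, hex, he2⟩ := exists_mem_parity_eq_add_two_notMem hα.1.le hx
    exact card_ominus_inter_eq_iff_of_parity_eq_zero hα ha ha1 ha2 he (hex.trans hx0) he2 hr hr1
      hs hs0
  · push Not at heven
    exact card_ominus_inter_eq_iff_of_forall_parity_eq_one hn hα
      (fun x hx => parity_eq_one_of_ne_zero (heven x hx)) ha ha2 hr hs hs0 hπ

end StableSets

/-- For `α ∈ P_i` with `i ≤ n - 1`, there is a unique `π ∈ P_{i+1}` with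
`|α ∩ π| = n - 1` and `|(α ⊖ 2) ∩ π| = n - 1`. -/
theorem unique_upper_neighbor (n i : ℕ) (hn : 2 ≤ n) (hi : i ≤ n - 1)
    (α : Finset (ZMod (2 * n + 2))) (hα : α ∈ Pset n i) :
    ∃! π : Finset (ZMod (2 * n + 2)), π ∈ Pset n (i + 1) ∧
      (α ∩ π).card = n - 1 ∧ ((ominus n α 2) ∩ π).card = n - 1 := by
  obtain ⟨hstab, heven, -⟩ := id hα
  obtain ⟨a, ha, ha1, ha2⟩ := exists_mem_parity_eq_one_add_two_notMem hα (by omega)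
  have hπ₀ := insert_add_one_erase_mem_Pset hα ha ha1 ha2
  have ha1α : a + 1 ∉ α := fun h => hstab.2 a ⟨ha, h⟩
  refine ⟨insert (a + 1) (α.erase a), ⟨hπ₀, ?_, ?_⟩, ?_⟩
  · rw [inter_insert_erase ha1α, card_erase_of_mem ha, hstab.1]
  · exact (card_ominus_inter_eq_iff hn hstab ha ha1 ha2 ha ha1 ha1α
      (by rw [parity_add, parity_one, ha1]; decide) hπ₀.1).2 ⟨rfl, rfl⟩
  rintro π ⟨hπ, hinter, hominus⟩
  obtain ⟨r, hr, s, hs, rfl⟩ :=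
    exists_eq_insert_erase_of_card_inter (hπ.1.1.trans hstab.1.symm)
      (by rw [hinter, hstab.1]; omega)
  obtain ⟨hr1, hs0⟩ := parity_eq_of_card_filter_insert_erase hr hs heven hπ.2.1
  obtain ⟨rfl, rfl⟩ := (card_ominus_inter_eq_iff hn hstab ha ha1 ha2 hr hr1 hs hs0 hπ.1).1 hominus
  rfl
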